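/- Let M be an e-persistent Mealy machine, L a language over I that is sound and complete for M, R the minimal DFA for L, P a minimal accepting state cover of R, and W a separating family for R. Consider the test suite T_L = { p·i·w | p ∈ P, i ∈ I^{≤1}, w ∈ W_{δ^R(p·i)} }. After executing all words of T_L (truncated to their longest prefixes in L, with one additional error step allowed), the tree states reached by the words of P are pairwise distinguishable: for every distinct p, q ∈ P, the states δ^M(q0,p) and δ^M(q0,q) of M are inequivalent. -/

import Mathlib

structure Mealy (I O : Type) where
  Q : Type
  q0 : Q
  trans : Q → I → Q
  out1 : Q → I → O

namespace Mealy

variable {I O : Type}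

def run (M : Mealy I O) : M.Q → List I → M.Q
  | q, [] => q
  | q, i :: σ => M.run (M.trans q i) σ

def out (M : Mealy I O) : M.Q → List I → List O
  | _, [] => []
  | q, i :: σ => M.out1 q i :: M.out (M.trans q i) σ

/-- `M` is `e`-persistent: once the output word ends in `e`, appending any
input keeps the last output equal to `e`. -/
def EPersistent (M : Mealy I O) (e : O) : Prop :=
  ∀ (σ : List I) (i : I),
    (M.out M.q0 σ).getLast? = some e →
    (M.out M.q0 (σ ++ [i])).getLast? = some e

end Mealy

/-
Take distinct `p, q ∈ P`. They reach distinct states of `R`, so the separating family yields a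
word `w` with exactly one of `p·w`, `q·w` in `L`; `w` is nonempty since both `p` and `q` are
accepted. By soundness and completeness, membership of a word in `L` is read off whether the last
output of `M` on it is `e`, and for nonempty `w` the last output on `p·w` is the last output of `w`
from `δ^M(q0,p)`. Hence `w` itself gives different outputs from `δ^M(q0,p)` and `δ^M(q0,q)`.
-/

namespace Mealy

variable {I O : Type} (M : Mealy I O)

theorem out_append (q : M.Q) (a b : List I) :
    M.out q (a ++ b) = M.out q a ++ M.out (M.run q a) b := by
  induction a generalizing q with
  | nil => rfl
  | cons i t ih => simp only [List.cons_append, out, run, ih]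

theorem out_ne_nil (q : M.Q) {a : List I} (h : a ≠ []) : M.out q a ≠ [] := by
  cases a with
  | nil => exact absurd rfl h
  | cons i t => exact List.cons_ne_nil _ _

theorem getLast?_out_append (q : M.Q) (a : List I) {b : List I} (hb : b ≠ []) :
    (M.out q (a ++ b)).getLast? = (M.out (M.run q a) b).getLast? := by
  rw [out_append, List.getLast?_append_of_ne_nil _ (M.out_ne_nil _ hb)]

theorem append_mem_iff_of_out_eq {e : O} {L : Set (List I)}
    (hLM : ∀ σ, σ ∉ L ↔ (M.out M.q0 σ).getLast? = some e)
    {u v w : List I} (hw : w ≠ []) (hout : M.out (M.run M.q0 u) w = M.out (M.run M.q0 v) w) :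
    u ++ w ∈ L ↔ v ++ w ∈ L := by
  rw [← not_iff_not, hLM, hLM, M.getLast?_out_append _ _ hw, M.getLast?_out_append _ _ hw, hout]

end Mealy

theorem stmt10_general {I O Qr : Type} (M : Mealy I O) (e : O) (R : DFA I Qr)
    (L : Set (List I))
    (hL : ∀ σ : List I, σ ∈ L ↔ R.eval σ ∈ R.accept)
    (hsound : ∀ σ ∉ L, (M.out M.q0 σ).getLast? = some e)
    (hcomplete : ∀ σ : List I, (M.out M.q0 σ).getLast? = some e → σ ∉ L)
    (P : Set (List I))
    -- `P` is an accepting state cover reaching pairwise distinct states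
    (hPacc : ∀ p ∈ P, R.eval p ∈ R.accept)
    (hPdist : ∀ p ∈ P, ∀ q ∈ P, p ≠ q → R.eval p ≠ R.eval q)
    (W : Qr → Set (List I))
    -- `W` is a separating family for `R`
    (hW : ∀ p q : Qr, p ≠ q →
      ∃ w ∈ W p ∩ W q, (R.evalFrom p w ∈ R.accept ↔ R.evalFrom q w ∉ R.accept)) :
    ∀ p ∈ P, ∀ q ∈ P, p ≠ q →
      ∃ σ : List I, M.out (M.run M.q0 p) σ ≠ M.out (M.run M.q0 q) σ := by
  intro p hp q hq hpq
  obtain ⟨w, -, hw⟩ := hW _ _ (hPdist p hp q hq hpq)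
  have hw_ne : w ≠ [] := by
    rintro rfl
    exact hw.mp (hPacc p hp) (hPacc q hq)
  have hsep : p ++ w ∈ L ↔ q ++ w ∉ L := by
    rwa [hL, hL, DFA.eval, R.evalFrom_of_append, R.evalFrom_of_append]
  refine ⟨w, fun hout => ?_⟩
  have hLM : ∀ σ, σ ∉ L ↔ (M.out M.q0 σ).getLast? = some e :=
    fun σ => ⟨hsound σ, hcomplete σ⟩
  exact iff_not_self ((M.append_mem_iff_of_out_eq hLM hw_ne hout).symm.trans hsep)

/-- Let `M` be `e`-persistent, `L` sound and complete for `M`, `R` the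
minimal DFA for `L`, `P` a minimal accepting state cover of `R`, and `W` a
separating family for `R`.  Then (after executing the test suite
`T_L = { p·i·w | p ∈ P, i ∈ I^{≤1}, w ∈ W_{δ(p·i)} }`) the states of `M`
reached by distinct words of `P` are pairwise inequivalent. -/
theorem stmt10 {I O Qr : Type} (M : Mealy I O) (e : O) (R : DFA I Qr)
    (L : Set (List I))
    (hL : ∀ σ : List I, σ ∈ L ↔ R.eval σ ∈ R.accept)
    (hpers : M.EPersistent e)
    (hsound : ∀ σ ∉ L, (M.out M.q0 σ).getLast? = some e)
    (hcomplete : ∀ σ : List I, (M.out M.q0 σ).getLast? = some e → σ ∉ L)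
    -- minimality of `R`: distinct states are separated by some word
    (hRmin : ∀ p q : Qr, p ≠ q →
      ∃ w : List I, (R.evalFrom p w ∈ R.accept ↔ R.evalFrom q w ∉ R.accept))
    (P : Set (List I))
    -- `P` is an accepting state cover reaching pairwise distinct states
    (hPacc : ∀ p ∈ P, R.eval p ∈ R.accept)
    (hPdist : ∀ p ∈ P, ∀ q ∈ P, p ≠ q → R.eval p ≠ R.eval q)
    (W : Qr → Set (List I))
    -- `W` is a separating family for `R`
    (hW : ∀ p q : Qr, p ≠ q →
      ∃ w ∈ W p ∩ W q, (R.evalFrom p w ∈ R.accept ↔ R.evalFrom q w ∉ R.accept)) :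
    ∀ p ∈ P, ∀ q ∈ P, p ≠ q →
      ∃ σ : List I, M.out (M.run M.q0 p) σ ≠ M.out (M.run M.q0 q) σ :=
  stmt10_general M e R L hL hsound hcomplete P hPacc hPdist W hW
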